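/- arXiv:1706.06679 — 2 statements merged into one kernel-verified Lean document; each statement's English description precedes it below -/
import Mathlib

section
/- For s with Re s = 1 and u ≥ 1, the function G(u,s) = ∫_0^{1/u} (1 − e^{−ts})/t dt satisfies |G(u,s)| ≤ C·|s|/u when |s| < u, and |G(u,s)| ≤ C·(1 + log(|s|/u)) when |s| > u, for some absolute constant C. -/
open MeasureTheory

/-- `G u s = ∫_0^{1/u} (1 − e^{−ts})/t dt`. -/
noncomputable def G (u : ℝ) (s : ℂ) : ℂ :=
  ∫ t in (0:ℝ)..(1/u), (1 - Complex.exp (-(t * s))) / t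

/-!
For `Re s ≥ 0` and `t > 0` the integrand is bounded by `2 min(|s|, 1/t)`: near `0` by the
derivative bound `|1 - e^{-z}| ≤ 2|z|`, and always by `|1 - e^{-z}| ≤ 1 + e^{-Re z} ≤ 2`.
The bound `2|s|` over `[0, 1/u]` gives `2|s|/u`; when `|s| > u`, splitting at `1/|s|` gives
`2` from the first piece and `∫_{1/|s|}^{1/u} 2/t dt = 2 log(|s|/u)` from the second.
-/

open Complex intervalIntegral

lemma norm_one_sub_cexp_neg_le_two_mul_norm {z : ℂ} (hz : ‖z‖ ≤ 1) :
    ‖1 - cexp (-z)‖ ≤ 2 * ‖z‖ := by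
  simpa [norm_sub_rev] using norm_exp_sub_one_le (x := -z) (by simpa using hz)

lemma norm_one_sub_cexp_neg_le_two {z : ℂ} (hz : 0 ≤ z.re) : ‖1 - cexp (-z)‖ ≤ 2 := by
  calc ‖1 - cexp (-z)‖ ≤ ‖(1 : ℂ)‖ + ‖cexp (-z)‖ := norm_sub_le _ _
    _ = 1 + Real.exp (-z.re) := by rw [norm_exp, norm_one, neg_re]
    _ ≤ 2 := by linarith [Real.exp_le_one_iff.2 (neg_nonpos.2 hz)]

section Integrand

variable {s : ℂ} {t : ℝ}

lemma norm_one_sub_cexp_neg_mul_div_le_two_div (hs : 0 ≤ s.re) (ht : 0 < t) :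
    ‖(1 - cexp (-(t * s))) / t‖ ≤ 2 / t := by
  rw [norm_div, norm_real, Real.norm_of_nonneg ht.le]
  gcongr
  exact norm_one_sub_cexp_neg_le_two (by simpa using mul_nonneg ht.le hs)

lemma norm_one_sub_cexp_neg_mul_div_le_two_mul_norm (hs : 0 ≤ s.re) (ht : 0 < t) :
    ‖(1 - cexp (-(t * s))) / t‖ ≤ 2 * ‖s‖ := by
  rcases le_or_gt (t * ‖s‖) 1 with hts | hts
  · have hnorm : ‖(t : ℂ) * s‖ = t * ‖s‖ := by
      rw [norm_mul, norm_real, Real.norm_of_nonneg ht.le]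
    rw [norm_div, norm_real, Real.norm_of_nonneg ht.le, div_le_iff₀ ht]
    calc ‖1 - cexp (-(t * s))‖ ≤ 2 * (t * ‖s‖) :=
          hnorm ▸ norm_one_sub_cexp_neg_le_two_mul_norm (hnorm ▸ hts)
      _ = 2 * ‖s‖ * t := by ring
  · calc ‖(1 - cexp (-(t * s))) / t‖ ≤ 2 / t := norm_one_sub_cexp_neg_mul_div_le_two_div hs ht
      _ ≤ 2 * ‖s‖ := by rw [div_le_iff₀ ht]; linarith

end Integrand

section Integral

variable {s : ℂ} {a b : ℝ}

lemma intervalIntegrable_one_sub_cexp_neg_mul_div (hs : 0 ≤ s.re) (ha : 0 ≤ a) (hb : 0 ≤ b) :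
    IntervalIntegrable (fun t : ℝ => (1 - cexp (-(t * s))) / t) volume a b := by
  rw [intervalIntegrable_iff]
  refine IntegrableOn.of_bound measure_Ioc_lt_top
    (Measurable.aestronglyMeasurable (by fun_prop)) (2 * ‖s‖) ?_
  filter_upwards [ae_restrict_mem measurableSet_uIoc] with t ht
  exact norm_one_sub_cexp_neg_mul_div_le_two_mul_norm hs ((le_min ha hb).trans_lt ht.1)

lemma norm_integral_one_sub_cexp_neg_mul_div_le_mul (hs : 0 ≤ s.re) (hb : 0 ≤ b) :
    ‖∫ t in (0 : ℝ)..b, (1 - cexp (-(t * s))) / t‖ ≤ 2 * ‖s‖ * b := by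
  have h := norm_integral_le_of_norm_le_const fun t (ht : t ∈ Set.uIoc 0 b) =>
    norm_one_sub_cexp_neg_mul_div_le_two_mul_norm hs ((le_min le_rfl hb).trans_lt ht.1)
  rwa [sub_zero, abs_of_nonneg hb] at h

lemma norm_integral_one_sub_cexp_neg_mul_div_le_log (hs : 0 ≤ s.re) (ha : 0 < a) (hab : a ≤ b) :
    ‖∫ t in a..b, (1 - cexp (-(t * s))) / t‖ ≤ 2 * Real.log (b / a) := by
  have hb : 0 < b := ha.trans_le hab
  calc ‖∫ t in a..b, (1 - cexp (-(t * s))) / t‖ ≤ ∫ t in a..b, 2 * t⁻¹ := by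
        refine norm_integral_le_of_norm_le hab (Filter.Eventually.of_forall fun t ht => ?_)
          ((intervalIntegral.intervalIntegrable_inv (fun t ht => ?_) continuousOn_id).const_mul 2)
        · simpa [div_eq_mul_inv] using norm_one_sub_cexp_neg_mul_div_le_two_div hs (ha.trans ht.1)
        · exact (lt_min ha hb).trans_le ht.1 |>.ne'
    _ = 2 * Real.log (b / a) := by
        rw [intervalIntegral.integral_const_mul, integral_inv_of_pos ha hb]

end Integral

lemma norm_G_le_mul {s : ℂ} {u : ℝ} (hs : 0 ≤ s.re) (hu : 0 < u) : ‖G u s‖ ≤ 2 * ‖s‖ / u := by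
  calc ‖G u s‖ ≤ 2 * ‖s‖ * (1 / u) :=
        norm_integral_one_sub_cexp_neg_mul_div_le_mul hs (one_div_pos.2 hu).le
    _ = 2 * ‖s‖ / u := mul_one_div _ _

lemma norm_G_le_one_add_log {s : ℂ} {u : ℝ} (hs : 0 ≤ s.re) (hu : 0 < u) (hus : u ≤ ‖s‖) :
    ‖G u s‖ ≤ 2 * (1 + Real.log (‖s‖ / u)) := by
  have hs0 : 0 < ‖s‖ := hu.trans_le hus
  have hsplit : 1 / ‖s‖ ≤ 1 / u := one_div_le_one_div_of_le hu hus
  have hinner := norm_integral_one_sub_cexp_neg_mul_div_le_mul hs (one_div_pos.2 hs0).le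
  have houter := norm_integral_one_sub_cexp_neg_mul_div_le_log hs (one_div_pos.2 hs0) hsplit
  rw [mul_assoc, mul_one_div_cancel hs0.ne', mul_one] at hinner
  rw [show 1 / u / (1 / ‖s‖) = ‖s‖ / u by field_simp] at houter
  unfold G
  rw [← integral_add_adjacent_intervals
    (intervalIntegrable_one_sub_cexp_neg_mul_div hs le_rfl (one_div_pos.2 hs0).le)
    (intervalIntegrable_one_sub_cexp_neg_mul_div hs (one_div_pos.2 hs0).le (one_div_pos.2 hu).le)]
  linarith [norm_add_le (∫ t in (0 : ℝ)..1 / ‖s‖, (1 - cexp (-(t * s))) / t)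
    (∫ t in 1 / ‖s‖..1 / u, (1 - cexp (-(t * s))) / t)]

theorem G_bound :
    ∃ C : ℝ, 0 < C ∧ ∀ (s : ℂ) (u : ℝ), s.re = 1 → 1 ≤ u →
      (‖s‖ < u → ‖G u s‖ ≤ C * ‖s‖ / u) ∧
      (u < ‖s‖ → ‖G u s‖ ≤ C * (1 + Real.log (‖s‖ / u))) := by
  refine ⟨2, two_pos, fun s u hs hu => ⟨fun _ => ?_, fun hus => ?_⟩⟩
  · exact norm_G_le_mul (hs ▸ zero_le_one) (one_pos.trans_le hu)
  · exact norm_G_le_one_add_log (hs ▸ zero_le_one) (one_pos.trans_le hu) hus.le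
end

section
/- For s with Re s = 1, u ≥ 1, and integer ν ≥ 1, the ν-th partial derivative in u of G(u,s) = ∫_0^{1/u}(1−e^{−ts})/t dt satisfies |∂^ν G/∂u^ν| ≤ C_ν · |s|^{ν−1}/u^{2ν−1} whenever |s| > u. -/
open MeasureTheory

/-!
Since `∂G/∂u = (e^{-s/u} - 1)/u`, the `ν`-th derivative of `G` is the `(ν-1)`-th derivative of
the holomorphic function `z ↦ (e^{-s/z} - 1)/z` at the real point `u`. On the circle of radius
`R = u²/(2|s|) ≤ u/2` about `u` we have `|s/z - s/u| ≤ 1` and `Re(s/u) ≥ 0`, so `|e^{-s/z}| ≤ e`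
and the function is `O(1/u)` there. Cauchy's estimate gives
`|f^{(n)}(u)| ≤ n! · O(1/u) / R^n = O(|s|^n / u^{2n+1})`.
-/

open Complex Metric Nat

lemma iteratedDeriv_comp_ofReal {E : Type*} [NormedAddCommGroup E] [NormedSpace ℂ E]
    [CompleteSpace E] {f : ℂ → E} {U : Set ℂ} (hU : IsOpen U) (hf : DifferentiableOn ℂ f U)
    (n : ℕ) {x : ℝ} (hx : (x : ℂ) ∈ U) :
    iteratedDeriv n (fun y : ℝ => f y) x = iteratedDeriv n f x := by
  induction n generalizing x with
  | zero => simp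
  | succ n ih =>
    have hloc : iteratedDeriv n (fun y : ℝ => f y) =ᶠ[nhds x] fun y : ℝ => iteratedDeriv n f y :=
      Filter.eventually_of_mem ((hU.preimage continuous_ofReal).mem_nhds hx) fun y hy => ih hy
    have hdiff : DifferentiableAt ℂ (iteratedDeriv n f) x := by
      rw [iteratedDeriv_eq_iterate]
      exact ((hf.analyticOnNhd hU).iterated_deriv n x hx).differentiableAt
    rw [iteratedDeriv_succ, iteratedDeriv_succ, hloc.deriv_eq]
    simpa [Function.comp_def] using (hdiff.hasDerivAt.scomp x ofRealCLM.hasDerivAt).deriv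

noncomputable def derivG (z s : ℂ) : ℂ := (exp (-(s / z)) - 1) / z

lemma differentiableOn_derivG (s : ℂ) : DifferentiableOn ℂ (fun z => derivG z s) {0}ᶜ :=
  fun _ hz => ((((differentiableAt_const s).div differentiableAt_id hz).neg.cexp.sub_const 1).div
    differentiableAt_id hz).differentiableWithinAt

/- The integrand of `G` takes the junk value `0 / 0 = 0` at `t = 0`; replacing it by the
continuous `dslope` (value `s` at `0`) changes nothing on `(0, 1/v]`. -/
lemma continuous_dslope_one_sub_exp (s : ℂ) :
    Continuous (dslope (fun t : ℝ => 1 - exp (-(t * s))) 0) := by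
  rw [← continuousOn_univ, continuousOn_dslope Filter.univ_mem, continuousOn_univ]
  exact ⟨by fun_prop, by fun_prop⟩

lemma G_eq_integral_dslope (s : ℂ) {v : ℝ} (hv : 0 < v) :
    G v s = ∫ t in (0:ℝ)..v⁻¹, dslope (fun t : ℝ => 1 - exp (-(t * s))) 0 t := by
  rw [G, one_div]
  refine intervalIntegral.integral_congr_ae (Filter.Eventually.of_forall fun t ht => ?_)
  rw [Set.uIoc_of_le (inv_pos.2 hv).le] at ht
  rw [dslope_of_ne _ ht.1.ne', slope_def_module]
  simp [div_eq_inv_mul]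

lemma hasDerivAt_G (s : ℂ) {v : ℝ} (hv : 0 < v) :
    HasDerivAt (fun w : ℝ => G w s) (derivG v s) v := by
  have hG : (fun w : ℝ => G w s) =ᶠ[nhds v]
      (fun x => ∫ t in (0:ℝ)..x, dslope (fun t : ℝ => 1 - exp (-(t * s))) 0 t) ∘ (·⁻¹) := by
    filter_upwards [Ioi_mem_nhds hv] with w hw using G_eq_integral_dslope s hw
  refine HasDerivAt.congr_of_eventuallyEq ?_ hG
  convert ((continuous_dslope_one_sub_exp s).integral_hasStrictDerivAt 0 v⁻¹).hasDerivAt.scomp v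
    (hasDerivAt_inv hv.ne') using 1
  have hv0 : (v : ℂ) ≠ 0 := by exact_mod_cast hv.ne'
  rw [dslope_of_ne _ (inv_pos.2 hv).ne', slope_def_module, derivG]
  simp only [sub_zero, inv_inv, ofReal_inv, ofReal_zero, zero_mul, neg_zero, exp_zero, sub_self,
    real_smul, neg_smul, ofReal_pow]
  field_simp
  ring

lemma iteratedDeriv_succ_G (s : ℂ) {u : ℝ} (hu : 0 < u) (n : ℕ) :
    iteratedDeriv (n + 1) (fun v : ℝ => G v s) u = iteratedDeriv n (fun z => derivG z s) u := by
  have hderiv : deriv (fun v : ℝ => G v s) =ᶠ[nhds u] fun v : ℝ => derivG v s := by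
    filter_upwards [Ioi_mem_nhds hu] with v hv using (hasDerivAt_G s hv).deriv
  rw [iteratedDeriv_succ', hderiv.iteratedDeriv_eq, iteratedDeriv_comp_ofReal isOpen_compl_singleton
    (differentiableOn_derivG s) n (by simpa using hu.ne')]

section CauchyEstimate

variable {s z : ℂ} {u : ℝ}

lemma half_le_norm_of_norm_sub_le (hu : 0 ≤ u) (hz : ‖z - u‖ ≤ u / 2) : u / 2 ≤ ‖z‖ := by
  have := norm_sub_norm_le (u : ℂ) (u - z)
  rw [sub_sub_cancel, norm_sub_rev, Complex.norm_real, Real.norm_of_nonneg hu] at this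
  linarith

lemma sq_div_two_mul_norm_le_half (hu : 0 < u) (hus : u ≤ ‖s‖) :
    u ^ 2 / (2 * ‖s‖) ≤ u / 2 := by
  rw [div_le_div_iff₀ (by linarith) two_pos]
  nlinarith

lemma neg_one_le_re_div (hs : 0 ≤ s.re) (hu : 0 < u) (hus : u ≤ ‖s‖)
    (hz : ‖z - u‖ ≤ u ^ 2 / (2 * ‖s‖)) : -1 ≤ (s / z).re := by
  have hs0 : 0 < ‖s‖ := hu.trans_le hus
  have hzu := half_le_norm_of_norm_sub_le hu.le (hz.trans (sq_div_two_mul_norm_le_half hu hus))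
  have hz0 : z ≠ 0 := norm_pos_iff.1 (by linarith)
  have hu0 : (u : ℂ) ≠ 0 := by exact_mod_cast hu.ne'
  have hdiff : ‖s / z - s / u‖ ≤ 1 := by
    have hsub : s / z - s / u = s * (u - z) / (z * u) := by field_simp
    rw [hsub, norm_div, norm_mul, norm_mul, norm_sub_rev, Complex.norm_real,
      Real.norm_of_nonneg hu.le, div_le_one (by positivity)]
    calc ‖s‖ * ‖z - u‖ ≤ ‖s‖ * (u ^ 2 / (2 * ‖s‖)) := by gcongr
      _ = u / 2 * u := by field_simp
      _ ≤ ‖z‖ * u := by gcongr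
  have hre : 0 ≤ (s / u).re := by
    rw [div_ofReal_re]
    positivity
  have := abs_le.1 ((abs_re_le_norm (s / z - s / u)).trans hdiff)
  rw [sub_re] at this
  linarith [this.1]

lemma norm_derivG_le (hs : 0 ≤ s.re) (hu : 0 < u) (hus : u ≤ ‖s‖)
    (hz : ‖z - u‖ ≤ u ^ 2 / (2 * ‖s‖)) : ‖derivG z s‖ ≤ 2 * (Real.exp 1 + 1) / u := by
  have hzu := half_le_norm_of_norm_sub_le hu.le (hz.trans (sq_div_two_mul_norm_le_half hu hus))
  have hexp : ‖exp (-(s / z))‖ ≤ Real.exp 1 := by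
    rw [norm_exp, neg_re, Real.exp_le_exp, neg_le]
    exact neg_one_le_re_div hs hu hus hz
  calc ‖derivG z s‖ = ‖exp (-(s / z)) - 1‖ / ‖z‖ := norm_div _ _
    _ ≤ (Real.exp 1 + 1) / (u / 2) := by
      gcongr
      exact (norm_sub_le _ _).trans (by rw [norm_one]; linarith)
    _ = 2 * (Real.exp 1 + 1) / u := by field_simp

lemma norm_iteratedDeriv_derivG_le (hs : 0 ≤ s.re) (hu : 0 < u) (hus : u ≤ ‖s‖) (n : ℕ) :
    ‖iteratedDeriv n (fun z => derivG z s) u‖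
      ≤ n ! * 2 ^ (n + 1) * (Real.exp 1 + 1) * ‖s‖ ^ n / u ^ (2 * n + 1) := by
  have hs0 : 0 < ‖s‖ := hu.trans_le hus
  set R := u ^ 2 / (2 * ‖s‖) with hR
  have hR0 : 0 < R := by positivity
  have hball : closedBall (u : ℂ) R ⊆ {0}ᶜ := fun z hz hz0 => by
    have := half_le_norm_of_norm_sub_le hu.le
      ((mem_closedBall_iff_norm.1 hz).trans (sq_div_two_mul_norm_le_half hu hus))
    rw [Set.mem_singleton_iff.1 hz0, norm_zero] at this
    linarith
  have hdiff : DiffContOnCl ℂ (fun z => derivG z s) (ball (u : ℂ) R) :=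
    ((differentiableOn_derivG s).mono ((closure_ball _ hR0.ne').subset.trans hball)).diffContOnCl
  calc ‖iteratedDeriv n (fun z => derivG z s) u‖ ≤ n ! * (2 * (Real.exp 1 + 1) / u) / R ^ n :=
        norm_iteratedDeriv_le_of_forall_mem_sphere_norm_le n hR0 hdiff fun z hz =>
          norm_derivG_le hs hu hus (mem_sphere_iff_norm.1 hz).le
    _ = n ! * 2 ^ (n + 1) * (Real.exp 1 + 1) * ‖s‖ ^ n / u ^ (2 * n + 1) := by
        rw [hR, div_pow, mul_pow, ← pow_mul, pow_succ, pow_succ]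
        field_simp

end CauchyEstimate

theorem iteratedDeriv_G_bound (ν : ℕ) (hν : 1 ≤ ν) :
    ∃ C : ℝ, 0 < C ∧ ∀ (s : ℂ) (u : ℝ), s.re = 1 → 1 ≤ u → u < ‖s‖ →
      ‖iteratedDeriv ν (fun v : ℝ => G v s) u‖ ≤ C * ‖s‖ ^ (ν - 1) / u ^ (2 * ν - 1) := by
  obtain ⟨n, rfl⟩ : ∃ n, ν = n + 1 := ⟨ν - 1, by omega⟩
  refine ⟨n ! * 2 ^ (n + 1) * (Real.exp 1 + 1), by positivity, fun s u hs hu hus => ?_⟩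
  have hu0 : 0 < u := one_pos.trans_le hu
  rw [iteratedDeriv_succ_G s hu0, show n + 1 - 1 = n by omega,
    show 2 * (n + 1) - 1 = 2 * n + 1 by omega]
  exact norm_iteratedDeriv_derivG_le (by simp [hs]) hu0 hus.le n
end
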